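/- arXiv:1702.08290 — 2 statements merged into one kernel-verified Lean document; each statement's English description precedes it below -/
import Mathlib

section
/- (Deterministic asynchronous incremental subgradient method, diminishing step size) In the deterministic asynchronous incremental subgradient setup, if the positive non-increasing step sizes satisfy Σ_{t=1}^∞ ε_t = ∞ and Σ_{t=1}^∞ ε_t² < ∞, then liminf_{t→∞} D(λ_t) = 𝖣, where λ_t := λ_t^0. -/
/-!
A projected step is nonexpansive towards `λ* ⪰ 0`, so `‖λ_t^i - λ*‖²` decreases by
`2 ε_t ⟪g_t^i, λ_t^{i-1} - λ*⟫` up to `ε_t² V²`. Every inner step moves the iterate by at most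
`ε_t V`, so the delayed point `λ_{t-τ_i(t)}^{i-1}` and the round start `λ_t` are within
`(τ + 2) K ε_{t-τ} V` of `λ_t^{i-1}`; the subgradient inequality at the delayed point and the
`V`-Lipschitz bound on `D^i` then give `⟪g_t^i, λ_t^{i-1} - λ*⟫ ≥ D^i(λ_t) - D^i(λ*) - O(ε_{t-τ})`.
Summing over a round,
`‖λ_{t+1} - λ*‖² + 2 ε_t (D(λ_t) - 𝖣) ≤ ‖λ_t - λ*‖² + C ε_{t-τ}²`,
so `Σ ε_t (D(λ_t) - 𝖣) < ∞`. Since `Σ ε_t = ∞` and `D(λ_t) ≥ 𝖣`, the gap `D(λ_t) - 𝖣` cannot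
stay bounded away from `0`, which is `liminf D(λ_t) = 𝖣`.
-/

open Finset Filter
open scoped RealInnerProductSpace

/-- Componentwise positive part `[x]⁺` on `ℝ^d`. -/
noncomputable def posProj {d : ℕ} (x : EuclideanSpace ℝ (Fin d)) :
    EuclideanSpace ℝ (Fin d) :=
  WithLp.toLp 2 (fun k => max (x k) 0)

def IsSubgrad {d : ℕ} (f : EuclideanSpace ℝ (Fin d) → ℝ)
    (x g : EuclideanSpace ℝ (Fin d)) : Prop :=
  ∀ y, f x + ⟪g, y - x⟫ ≤ f y

theorem posProj_nonneg {d : ℕ} (x : EuclideanSpace ℝ (Fin d)) (k : Fin d) : 0 ≤ posProj x k :=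
  le_max_right _ _

theorem posProj_eq_self {d : ℕ} {x : EuclideanSpace ℝ (Fin d)} (hx : ∀ k, 0 ≤ x k) :
    posProj x = x := by
  ext k
  exact max_eq_left (hx k)

theorem norm_posProj_sub_posProj_le {d : ℕ} (x y : EuclideanSpace ℝ (Fin d)) :
    ‖posProj x - posProj y‖ ≤ ‖x - y‖ := by
  rw [EuclideanSpace.norm_eq, EuclideanSpace.norm_eq]
  refine Real.sqrt_le_sqrt (sum_le_sum fun k _ => ?_)
  simpa only [posProj, PiLp.sub_apply, Real.norm_eq_abs, sq_abs] using
    pow_le_pow_left₀ (abs_nonneg _) (abs_max_sub_max_le_abs (x k) (y k) 0) 2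

theorem sq_norm_posProj_sub_le {d : ℕ} (x g : EuclideanSpace ℝ (Fin d))
    {z : EuclideanSpace ℝ (Fin d)} (hz : ∀ k, 0 ≤ z k) (ε : ℝ) :
    ‖posProj (x - ε • g) - z‖ ^ 2 ≤ ‖x - z‖ ^ 2 - 2 * ε * ⟪g, x - z⟫ + ε ^ 2 * ‖g‖ ^ 2 := by
  have hproj : ‖posProj (x - ε • g) - z‖ ≤ ‖(x - z) - ε • g‖ := by
    calc ‖posProj (x - ε • g) - z‖ = ‖posProj (x - ε • g) - posProj z‖ := by
          rw [posProj_eq_self hz]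
      _ ≤ ‖(x - ε • g) - z‖ := norm_posProj_sub_posProj_le _ _
      _ = ‖(x - z) - ε • g‖ := by rw [sub_right_comm]
  calc ‖posProj (x - ε • g) - z‖ ^ 2 ≤ ‖(x - z) - ε • g‖ ^ 2 :=
        pow_le_pow_left₀ (norm_nonneg _) hproj 2
    _ = _ := by
      rw [norm_sub_sq_real, real_inner_smul_right, norm_smul, mul_pow, Real.norm_eq_abs,
        sq_abs, real_inner_comm]
      ring

theorem norm_posProj_sub_le {d : ℕ} {x : EuclideanSpace ℝ (Fin d)} (hx : ∀ k, 0 ≤ x k)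
    (g : EuclideanSpace ℝ (Fin d)) {ε : ℝ} (hε : 0 ≤ ε) :
    ‖posProj (x - ε • g) - x‖ ≤ ε * ‖g‖ :=
  calc ‖posProj (x - ε • g) - x‖ = ‖posProj (x - ε • g) - posProj x‖ := by
        rw [posProj_eq_self hx]
    _ ≤ ‖(x - ε • g) - x‖ := norm_posProj_sub_posProj_le _ _
    _ = ε * ‖g‖ := by rw [sub_sub_cancel_left, norm_neg, norm_smul, Real.norm_of_nonneg hε]

theorem ConvexOn.exists_le_add_dual {E : Type*} [NormedAddCommGroup E] [NormedSpace ℝ E]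
    [FiniteDimensional ℝ E] {f : E → ℝ} (hf : ConvexOn ℝ Set.univ f) (x : E) :
    ∃ ℓ : StrongDual ℝ E, ∀ y, f x + ℓ (y - x) ≤ f y := by
  have hcont : Continuous f := continuousOn_univ.mp (hf.continuousOn isOpen_univ)
  have hopen : IsOpen {p : E × ℝ | p.1 ∈ Set.univ ∧ f p.1 < p.2} := by
    simp only [Set.mem_univ, true_and]
    exact isOpen_lt (hcont.comp continuous_fst) continuous_snd
  obtain ⟨φ, hφ⟩ := geometric_hahn_banach_open_point hf.convex_strict_epigraph hopen
    (x := (x, f x)) (by simp)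
  have hsplit : ∀ y r, φ (y, r) = φ (y, 0) + r * φ (0, 1) := fun y r => by
    rw [← smul_eq_mul, ← map_smul, ← map_add, Prod.smul_mk, smul_zero, smul_eq_mul, mul_one,
      Prod.mk_add_mk, add_zero, zero_add]
  have hc : φ (0, 1) < 0 := by
    have := hφ (x, f x + 1) (by simp)
    rw [hsplit x (f x + 1), hsplit x (f x)] at this
    linarith
  -- Rescaling `φ` so that its vertical slope is `-1` turns the separation into the claim.
  set ψ : StrongDual ℝ (E × ℝ) := (-(φ (0, 1))⁻¹) • φ
  have hψ : ∀ y r, ψ (y, r) = ψ (y, 0) - r := fun y r => by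
    simp only [ψ, smul_apply, smul_eq_mul, hsplit y r]
    field_simp [hc.ne]
    ring
  refine ⟨ψ.comp (ContinuousLinearMap.inl ℝ E ℝ), fun y => le_of_forall_gt fun r hr => ?_⟩
  have hlt : ψ (y, r) < ψ (x, f x) := by
    simp only [ψ, smul_apply, smul_eq_mul]
    exact mul_lt_mul_of_pos_left (hφ (y, r) ⟨Set.mem_univ y, hr⟩)
      (neg_pos.mpr (inv_lt_zero.mpr hc))
  have hlin : ψ (y - x, 0) = ψ (y, 0) - ψ (x, 0) := by
    rw [← map_sub, Prod.mk_sub_mk, sub_zero]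
  rw [hψ y r, hψ x (f x)] at hlt
  simp only [ContinuousLinearMap.coe_comp, Function.comp_apply, ContinuousLinearMap.inl_apply,
    hlin]
  linarith

theorem exists_isSubgrad {d : ℕ} {f : EuclideanSpace ℝ (Fin d) → ℝ}
    (hf : ConvexOn ℝ Set.univ f) (x : EuclideanSpace ℝ (Fin d)) : ∃ g, IsSubgrad f x g := by
  obtain ⟨ℓ, hℓ⟩ := hf.exists_le_add_dual x
  exact ⟨(InnerProductSpace.toDual ℝ _).symm ℓ, fun y => by
    simpa only [InnerProductSpace.toDual_symm_apply] using hℓ y⟩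

theorem ConvexOn.sub_le_mul_norm_sub {d : ℕ} {f : EuclideanSpace ℝ (Fin d) → ℝ}
    (hf : ConvexOn ℝ Set.univ f) {V : ℝ} (hV : ∀ x g, IsSubgrad f x g → ‖g‖ ≤ V)
    (x y : EuclideanSpace ℝ (Fin d)) : f x - f y ≤ V * ‖x - y‖ := by
  obtain ⟨g, hg⟩ := exists_isSubgrad hf x
  have hinner : -(‖g‖ * ‖y - x‖) ≤ ⟪g, y - x⟫ :=
    neg_le_of_abs_le (abs_real_inner_le_norm g (y - x))
  have hnorm : ‖g‖ * ‖y - x‖ ≤ V * ‖x - y‖ := by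
    rw [norm_sub_rev y x]
    exact mul_le_mul_of_nonneg_right (hV x g hg) (norm_nonneg _)
  linarith [hg y]

theorem IsSubgrad.sub_sub_le_inner {d : ℕ} {f : EuclideanSpace ℝ (Fin d) → ℝ}
    {y g : EuclideanSpace ℝ (Fin d)} (hg : IsSubgrad f y g) {V : ℝ} (hgV : ‖g‖ ≤ V)
    {z : EuclideanSpace ℝ (Fin d)} (hz : f z - f y ≤ V * ‖z - y‖) (x w : EuclideanSpace ℝ (Fin d)) :
    f z - f w - V * ‖z - y‖ - V * ‖x - y‖ ≤ ⟪g, x - w⟫ := by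
  have hsplit : ⟪g, x - w⟫ = ⟪g, x - y⟫ - ⟪g, w - y⟫ := by
    rw [← inner_sub_right, sub_sub_sub_cancel_right]
  have hxy : -(V * ‖x - y‖) ≤ ⟪g, x - y⟫ :=
    (neg_le_neg (mul_le_mul_of_nonneg_right hgV (norm_nonneg _))).trans
      (neg_le_of_abs_le (abs_real_inner_le_norm g (x - y)))
  linarith [hg w]

theorem summable_of_eventually_add_le_add {a b c : ℕ → ℝ} (ha : ∀ t, 0 ≤ a t)
    (hb : ∀ᶠ t in atTop, 0 ≤ b t) (hc : Summable c) (hc₀ : ∀ t, 0 ≤ c t)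
    (h : ∀ᶠ t in atTop, a (t + 1) + b t ≤ a t + c t) : Summable b := by
  obtain ⟨N, hN⟩ := eventually_atTop.mp (hb.and h)
  have hcN := (summable_nat_add_iff N).mpr hc
  refine (summable_nat_add_iff N).mp <| summable_of_sum_range_le
    (fun t => (hN (t + N) (Nat.le_add_left N t)).1) (c := a N + ∑' t, c (t + N)) fun n => ?_
  calc ∑ t ∈ range n, b (t + N) ≤ ∑ t ∈ range n, ((a (t + N) - a (t + 1 + N)) + c (t + N)) :=
        sum_le_sum fun t _ => by
          linarith [Nat.add_right_comm t 1 N ▸ (hN (t + N) (Nat.le_add_left N t)).2]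
    _ = a N - a (n + N) + ∑ t ∈ range n, c (t + N) := by
        rw [sum_add_distrib, sum_range_sub' fun t => a (t + N), zero_add]
    _ ≤ a N + ∑' t, c (t + N) := by
        linarith [ha (n + N), hcN.sum_le_tsum (range n) fun t _ => hc₀ (t + N)]

theorem liminf_eq_of_summable_mul_sub {f ε : ℕ → ℝ} {m : ℝ} (hε : ∀ t, 0 ≤ ε t)
    (hεdiv : ¬ Summable ε) (hf : ∀ᶠ t in atTop, m ≤ f t)
    (hsum : Summable fun t => ε t * (f t - m)) : liminf f atTop = m := by
  have hfreq : ∀ δ > 0, ∃ᶠ t in atTop, f t ≤ m + δ := by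
    intro δ hδ
    by_contra hnot
    refine hεdiv (Summable.of_norm_bounded_eventually_nat (hsum.div_const δ) ?_)
    filter_upwards [not_frequently.mp hnot] with t ht
    rw [Real.norm_of_nonneg (hε t), le_div_iff₀ hδ]
    exact mul_le_mul_of_nonneg_left (by linarith [not_le.mp ht]) (hε t)
  have hbdd : IsBoundedUnder (· ≥ ·) atTop f := isBoundedUnder_of_eventually_ge hf
  have hcobdd : IsCoboundedUnder (· ≥ ·) atTop f :=
    IsCoboundedUnder.of_frequently_le (hfreq 1 one_pos)
  refine le_antisymm (le_of_forall_pos_le_add fun δ hδ => ?_) (le_liminf_of_le hcobdd hf)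
  exact liminf_le_of_frequently_le (hfreq δ hδ) hbdd

theorem le_sub_sum_add_of_forall_le_sub_add {u v : ℕ → ℝ} {w : ℝ} (K : ℕ)
    (h : ∀ i ∈ Icc 1 K, u i ≤ u (i - 1) - v i + w) :
    u K ≤ u 0 - ∑ i ∈ Icc 1 K, v i + K * w := by
  induction K with
  | zero => simp
  | succ n ih =>
    have hn := h (n + 1) (by simp)
    rw [Nat.add_sub_cancel] at hn
    rw [sum_Icc_succ_top (by omega), Nat.cast_succ]
    linarith [ih fun i hi => h i (Icc_subset_Icc_right n.le_succ hi)]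

structure IsIncrementalRun {d : ℕ} (K : ℕ) (V : ℝ) (ε : ℕ → ℝ)
    (g lam : ℕ → ℕ → EuclideanSpace ℝ (Fin d)) : Prop where
  shift : ∀ t, 2 ≤ t → lam t 0 = lam (t - 1) K
  update : ∀ t, 1 ≤ t → ∀ i, 1 ≤ i → i ≤ K → lam t i = posProj (lam t (i - 1) - ε t • g t i)
  norm_le : ∀ t, 1 ≤ t → ∀ i, 1 ≤ i → i ≤ K → ‖g t i‖ ≤ V

namespace IsIncrementalRun

variable {d K : ℕ} {V : ℝ} {ε : ℕ → ℝ} {g lam : ℕ → ℕ → EuclideanSpace ℝ (Fin d)}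

-- Only from round 2 on: the starting point `lam 1 0` need not lie in the orthant.
theorem nonneg (run : IsIncrementalRun K V ε g lam) (hK : 1 ≤ K) {t : ℕ} (ht : 2 ≤ t)
    {i : ℕ} (hi : i ≤ K) (k : Fin d) : 0 ≤ lam t i k := by
  rcases Nat.eq_zero_or_pos i with rfl | hi₁
  · rw [run.shift t ht, run.update (t - 1) (by omega) K hK le_rfl]
    exact posProj_nonneg _ k
  · rw [run.update t (by omega) i hi₁ hi]
    exact posProj_nonneg _ k

theorem norm_sub_pred_le (run : IsIncrementalRun K V ε g lam) (hK : 1 ≤ K)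
    (hε : ∀ t, 0 ≤ ε t) {t : ℕ} (ht : 2 ≤ t) {i : ℕ} (hi₁ : 1 ≤ i) (hiK : i ≤ K) :
    ‖lam t i - lam t (i - 1)‖ ≤ ε t * V := by
  rw [run.update t (by omega) i hi₁ hiK]
  exact (norm_posProj_sub_le (run.nonneg hK ht (by omega)) _ (hε t)).trans
    (mul_le_mul_of_nonneg_left (run.norm_le t (by omega) i hi₁ hiK) (hε t))

theorem norm_sub_zero_le (run : IsIncrementalRun K V ε g lam) (hK : 1 ≤ K)
    (hε : ∀ t, 0 ≤ ε t) {t : ℕ} (ht : 2 ≤ t) {i : ℕ} (hi : i ≤ K) :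
    ‖lam t i - lam t 0‖ ≤ i * (ε t * V) := by
  induction i with
  | zero => simp
  | succ n ih =>
    have hstep := run.norm_sub_pred_le hK hε ht (i := n + 1) (by omega) hi
    rw [Nat.add_sub_cancel] at hstep
    calc ‖lam t (n + 1) - lam t 0‖ ≤ ‖lam t (n + 1) - lam t n‖ + ‖lam t n - lam t 0‖ :=
          norm_sub_le_norm_sub_add_norm_sub _ _ _
      _ ≤ ε t * V + n * (ε t * V) := add_le_add hstep (ih (by omega))
      _ = (n + 1 : ℕ) * (ε t * V) := by push_cast; ring

theorem norm_zero_sub_zero_le (run : IsIncrementalRun K V ε g lam) (hK : 1 ≤ K)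
    (hV : 0 ≤ V) (hε : ∀ t, 0 ≤ ε t) (hmono : Antitone ε) {s : ℕ} (hs : 2 ≤ s) (n : ℕ) :
    ‖lam (s + n) 0 - lam s 0‖ ≤ n * (K * (ε s * V)) := by
  induction n with
  | zero => simp
  | succ n ih =>
    have hround : ‖lam (s + n) K - lam (s + n) 0‖ ≤ K * (ε s * V) :=
      (run.norm_sub_zero_le hK hε (by omega) le_rfl).trans <| by
        gcongr
        exact hmono (Nat.le_add_right s n)
    calc ‖lam (s + (n + 1)) 0 - lam s 0‖
        ≤ ‖lam (s + n) K - lam (s + n) 0‖ + ‖lam (s + n) 0 - lam s 0‖ := by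
          rw [run.shift (s + (n + 1)) (by omega), show s + (n + 1) - 1 = s + n by omega]
          exact norm_sub_le_norm_sub_add_norm_sub _ _ _
      _ ≤ K * (ε s * V) + n * (K * (ε s * V)) := add_le_add hround ih
      _ = (n + 1 : ℕ) * (K * (ε s * V)) := by push_cast; ring

theorem norm_sub_le_of_le_add (run : IsIncrementalRun K V ε g lam) (hK : 1 ≤ K)
    (hV : 0 ≤ V) (hε : ∀ t, 0 ≤ ε t) (hmono : Antitone ε) {τ s t : ℕ} (hs : 2 ≤ s)
    (hst : s ≤ t) (hts : t ≤ s + τ) {i j : ℕ} (hi : i ≤ K) (hj : j ≤ K) :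
    ‖lam t j - lam s i‖ ≤ (τ + 2) * K * (ε s * V) := by
  obtain ⟨n, rfl⟩ := Nat.exists_eq_add_of_le hst
  have hKε : ∀ {m}, m ≤ K → ∀ {r}, s ≤ r → (m : ℝ) * (ε r * V) ≤ K * (ε s * V) :=
    fun hm _ hr => mul_le_mul (by exact_mod_cast hm) (mul_le_mul_of_nonneg_right (hmono hr) hV)
      (mul_nonneg (hε _) hV) (Nat.cast_nonneg K)
  have hlast := (run.norm_sub_zero_le hK hε (by omega) hj).trans (hKε hj (Nat.le_add_right s n))
  have hfirst := (norm_sub_rev (lam s 0) (lam s i) ▸ run.norm_sub_zero_le hK hε hs hi).trans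
    (hKε hi le_rfl)
  have hmid : (n : ℝ) * (K * (ε s * V)) ≤ τ * (K * (ε s * V)) :=
    mul_le_mul_of_nonneg_right (by exact_mod_cast (by omega : n ≤ τ))
      (mul_nonneg K.cast_nonneg (mul_nonneg (hε s) hV))
  calc ‖lam (s + n) j - lam s i‖
      ≤ ‖lam (s + n) j - lam (s + n) 0‖ + ‖lam (s + n) 0 - lam s 0‖ + ‖lam s 0 - lam s i‖ := by
        simpa only [dist_eq_norm] using dist_triangle4 _ (lam (s + n) 0) (lam s 0) _
    _ ≤ K * (ε s * V) + τ * (K * (ε s * V)) + K * (ε s * V) :=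
        add_le_add_three hlast ((run.norm_zero_sub_zero_le hK hV hε hmono hs n).trans hmid) hfirst
    _ = (τ + 2) * K * (ε s * V) := by ring

theorem sq_norm_sub_le_of_isSubgrad (run : IsIncrementalRun K V ε g lam) (hK : 1 ≤ K)
    (hV : 0 ≤ V) (hε : ∀ t, 0 ≤ ε t) (hmono : Antitone ε) {f : EuclideanSpace ℝ (Fin d) → ℝ}
    (hf : ∀ x y, f x - f y ≤ V * ‖x - y‖) {τ s t : ℕ} (hs : 2 ≤ s) (hst : s ≤ t)
    (hts : t ≤ s + τ) {i : ℕ} (hi₁ : 1 ≤ i) (hiK : i ≤ K)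
    (hg : IsSubgrad f (lam s (i - 1)) (g t i)) {z : EuclideanSpace ℝ (Fin d)}
    (hz : ∀ k, 0 ≤ z k) :
    ‖lam t i - z‖ ^ 2 ≤ ‖lam t (i - 1) - z‖ ^ 2 - 2 * ε t * (f (lam t 0) - f z)
      + (4 * ((τ + 2) * K) + 1) * V ^ 2 * ε s ^ 2 := by
  have hgV := run.norm_le t (by omega) i hi₁ hiK
  have hdist : ∀ {j}, j ≤ K → ‖lam t j - lam s (i - 1)‖ ≤ (τ + 2) * K * (ε s * V) :=
    fun hj => run.norm_sub_le_of_le_add hK hV hε hmono hs hst hts (by omega) hj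
  have hinner := hg.sub_sub_le_inner hgV (hf (lam t 0) _) (lam t (i - 1)) z
  have hεts : ε t ≤ ε s := hmono hst
  have hstep := sq_norm_posProj_sub_le (lam t (i - 1)) (g t i) hz (ε t)
  rw [← run.update t (by omega) i hi₁ hiK] at hstep
  have hdelay : ε t * (V * ‖lam t 0 - lam s (i - 1)‖ + V * ‖lam t (i - 1) - lam s (i - 1)‖)
      ≤ 2 * ((τ + 2) * K) * V ^ 2 * ε s ^ 2 := by
    calc _ ≤ ε s * (V * ((τ + 2) * K * (ε s * V)) + V * ((τ + 2) * K * (ε s * V))) := by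
          gcongr
          exacts [hε s, hdist K.zero_le, hdist (by omega)]
      _ = _ := by ring
  have hnoise : ε t ^ 2 * ‖g t i‖ ^ 2 ≤ ε s ^ 2 * V ^ 2 := by
    gcongr
    exact hε t
  nlinarith [mul_le_mul_of_nonneg_left hinner (hε t)]

theorem round_descent (run : IsIncrementalRun K V ε g lam) (hK : 1 ≤ K) (hV : 0 ≤ V)
    (hε : ∀ t, 0 ≤ ε t) (hmono : Antitone ε) {D : ℕ → EuclideanSpace ℝ (Fin d) → ℝ}
    (hD : ∀ i ∈ Icc 1 K, ∀ x y, D i x - D i y ≤ V * ‖x - y‖) {τ : ℕ} {τdel : ℕ → ℕ → ℕ}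
    (hτ : ∀ t i, τdel t i ≤ τ)
    (hg : ∀ t, 1 ≤ t → ∀ i, 1 ≤ i → i ≤ K →
      IsSubgrad (D i) (lam (max 1 (t - τdel t i)) (i - 1)) (g t i))
    {z : EuclideanSpace ℝ (Fin d)} (hz : ∀ k, 0 ≤ z k) {t : ℕ} (ht : τ + 2 ≤ t) :
    ‖lam (t + 1) 0 - z‖ ^ 2 + 2 * (ε t * ∑ i ∈ Icc 1 K, (D i (lam t 0) - D i z))
      ≤ ‖lam t 0 - z‖ ^ 2 + K * ((4 * ((τ + 2) * K) + 1) * V ^ 2) * ε (t - τ) ^ 2 := by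
  have hupdate : ∀ i ∈ Icc 1 K, ‖lam t i - z‖ ^ 2
      ≤ ‖lam t (i - 1) - z‖ ^ 2 - 2 * ε t * (D i (lam t 0) - D i z)
        + (4 * ((τ + 2) * K) + 1) * V ^ 2 * ε (t - τ) ^ 2 := by
    intro i hi
    obtain ⟨hi₁, hiK⟩ := mem_Icc.mp hi
    have hτi := hτ t i
    have hsub := hg t (by omega) i hi₁ hiK
    rw [max_eq_right (by omega)] at hsub
    refine (run.sq_norm_sub_le_of_isSubgrad hK hV hε hmono (hD i hi) (τ := τ) (by omega)
      (by omega) (by omega) hi₁ hiK hsub hz).trans ?_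
    gcongr
    · exact hε _
    · exact hmono (by omega)
  have hsum := le_sub_sum_add_of_forall_le_sub_add K hupdate
  rw [← mul_sum] at hsum
  rw [run.shift (t + 1) (by omega), Nat.add_sub_cancel]
  linarith

end IsIncrementalRun

theorem stmt15_general (d K : ℕ) (hK : 1 ≤ K)
    (D : ℕ → EuclideanSpace ℝ (Fin d) → ℝ)
    (hDconv : ∀ i ∈ Icc 1 K, ConvexOn ℝ Set.univ (D i))
    (V : ℝ)
    (hsubbd : ∀ i ∈ Icc 1 K, ∀ x g : EuclideanSpace ℝ (Fin d),
      IsSubgrad (D i) x g → ‖g‖ ≤ V)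
    (lamstar : EuclideanSpace ℝ (Fin d)) (hstar : ∀ k, 0 ≤ lamstar k)
    (Dopt : ℝ) (hDopt : Dopt = ∑ i ∈ Icc 1 K, D i lamstar)
    (hmin : ∀ μ : EuclideanSpace ℝ (Fin d), (∀ k, 0 ≤ μ k) →
      Dopt ≤ ∑ i ∈ Icc 1 K, D i μ)
    (ε : ℕ → ℝ) (hεpos : ∀ t, 0 < ε t) (hεmono : ∀ s t, s ≤ t → ε t ≤ ε s)
    (hεdiv : ¬ Summable ε) (hεsq : Summable (fun t => ε t ^ 2))
    (τmax : ℕ) (τdel : ℕ → ℕ → ℕ) (hτ : ∀ t i, τdel t i ≤ τmax)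
    (g : ℕ → ℕ → EuclideanSpace ℝ (Fin d))
    (lam : ℕ → ℕ → EuclideanSpace ℝ (Fin d))
    (hshift : ∀ t, 2 ≤ t → lam t 0 = lam (t - 1) K)
    (hgsub : ∀ t, 1 ≤ t → ∀ i, 1 ≤ i → i ≤ K →
      IsSubgrad (D i) (lam (max 1 (t - τdel t i)) (i - 1)) (g t i))
    (hupdate : ∀ t, 1 ≤ t → ∀ i, 1 ≤ i → i ≤ K →
      lam t i = posProj (lam t (i - 1) - ε t • g t i)) :
    liminf (fun t => ∑ i ∈ Icc 1 K, D i (lam t 0)) atTop = Dopt := by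
  have run : IsIncrementalRun K V ε g lam := ⟨hshift, hupdate,
    fun t _ i hi₁ hiK => hsubbd i (mem_Icc.mpr ⟨hi₁, hiK⟩) _ _ (hgsub t ‹_› i hi₁ hiK)⟩
  have hV : 0 ≤ V := (norm_nonneg _).trans (run.norm_le 1 le_rfl 1 le_rfl hK)
  have hε t : 0 ≤ ε t := (hεpos t).le
  have hmono : Antitone ε := fun s t hst => hεmono s t hst
  have hLip i (hi : i ∈ Icc 1 K) := (hDconv i hi).sub_le_mul_norm_sub (hsubbd i hi)
  have hopt : ∀ t, 2 ≤ t → Dopt ≤ ∑ i ∈ Icc 1 K, D i (lam t 0) :=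
    fun t ht => hmin _ (run.nonneg hK ht K.zero_le)
  have hgap x : ∑ i ∈ Icc 1 K, (D i x - D i lamstar) = ∑ i ∈ Icc 1 K, D i x - Dopt := by
    rw [sum_sub_distrib, hDopt]
  have hdescent := fun t (ht : τmax + 2 ≤ t) => hgap (lam t 0) ▸
    run.round_descent hK hV hε hmono hLip hτ hgsub hstar ht
  have hnoise : Summable fun t => ε (t - τmax) ^ 2 :=
    (summable_nat_add_iff τmax).mp (by simpa only [Nat.add_sub_cancel] using hεsq)
  have hsum := summable_of_eventually_add_le_add (a := fun t => ‖lam t 0 - lamstar‖ ^ 2)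
    (fun t => sq_nonneg _)
    (eventually_atTop.mpr ⟨2, fun t ht =>
      mul_nonneg zero_le_two (mul_nonneg (hε t) (sub_nonneg.mpr (hopt t ht)))⟩)
    (hnoise.mul_left _) (fun t => by positivity) (eventually_atTop.mpr ⟨_, hdescent⟩)
  exact liminf_eq_of_summable_mul_sub hε hεdiv (eventually_atTop.mpr ⟨2, hopt⟩)
    ((summable_mul_left_iff two_ne_zero).mp hsum)

/-- Deterministic asynchronous incremental subgradient method
with diminishing step sizes (`Σ ε_t = ∞`, `Σ ε_t² < ∞`):
`liminf_{t→∞} D(λ_t) = 𝖣`, where `λ_t := λ_t^0`. -/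
theorem stmt15 (d K : ℕ) (hd : 1 ≤ d) (hK : 1 ≤ K)
    (D : ℕ → EuclideanSpace ℝ (Fin d) → ℝ)
    (hDconv : ∀ i ∈ Icc 1 K, ConvexOn ℝ Set.univ (D i))
    (V : ℝ)
    (hsubbd : ∀ i ∈ Icc 1 K, ∀ x g : EuclideanSpace ℝ (Fin d),
      IsSubgrad (D i) x g → ‖g‖ ≤ V)
    (lamstar : EuclideanSpace ℝ (Fin d)) (hstar : ∀ k, 0 ≤ lamstar k)
    (Dopt : ℝ) (hDopt : Dopt = ∑ i ∈ Icc 1 K, D i lamstar)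
    (hmin : ∀ μ : EuclideanSpace ℝ (Fin d), (∀ k, 0 ≤ μ k) →
      Dopt ≤ ∑ i ∈ Icc 1 K, D i μ)
    (ε : ℕ → ℝ) (hεpos : ∀ t, 0 < ε t) (hεmono : ∀ s t, s ≤ t → ε t ≤ ε s)
    (hεdiv : ¬ Summable ε) (hεsq : Summable (fun t => ε t ^ 2))
    (τmax : ℕ) (τdel : ℕ → ℕ → ℕ) (hτ : ∀ t i, τdel t i ≤ τmax)
    (g : ℕ → ℕ → EuclideanSpace ℝ (Fin d))
    (lam : ℕ → ℕ → EuclideanSpace ℝ (Fin d))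
    (B₀ : ℝ) (hB₀ : ‖lam 1 0 - lamstar‖ ≤ B₀)
    (hshift : ∀ t, 2 ≤ t → lam t 0 = lam (t - 1) K)
    (hgsub : ∀ t, 1 ≤ t → ∀ i, 1 ≤ i → i ≤ K →
      IsSubgrad (D i) (lam (max 1 (t - τdel t i)) (i - 1)) (g t i))
    (hupdate : ∀ t, 1 ≤ t → ∀ i, 1 ≤ i → i ≤ K →
      lam t i = posProj (lam t (i - 1) - ε t • g t i)) :
    liminf (fun t => ∑ i ∈ Icc 1 K, D i (lam t 0)) atTop = Dopt :=
  stmt15_general d K hK D hDconv V hsubbd lamstar hstar Dopt hDopt hmin ε hεpos hεmono hεdiv hεsq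
    τmax τdel hτ g lam hshift hgsub hupdate
end

section
/- Let ε, η, C, B₀ > 0 and 𝖣 ∈ ℝ. Let (a_t)_{t≥1} be a sequence of nonnegative reals with a_1 ≤ B₀², and (d_t)_{t≥1} a sequence of reals. Suppose that for every t ≥ 1 such that d_s ≥ 𝖣 + (εC + η)/2 for all 1 ≤ s ≤ t, one has a_{t+1} ≤ a_t − 2ε(d_t − 𝖣) + ε²C. Then there exists t with t ≤ B₀²/(εη) + 1 and d_t < 𝖣 + (εC + η)/2. -/
/-! While `d` stays above the threshold, each step lowers `a` by at least `εη`; since `a ≥ 0`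
starts below `B₀²`, this can last for at most `B₀²/(εη)` steps. -/

section Descent

variable {K : Type*} [Field K] [LinearOrder K] [IsStrictOrderedRing K]
  {a : ℕ → K} {P : ℕ → Prop} {δ : K}

theorem le_sub_mul_of_descent
    (hstep : ∀ t, 1 ≤ t → (∀ s, 1 ≤ s → s ≤ t → P s) → a (t + 1) ≤ a t - δ)
    {T : ℕ} (hP : ∀ s, 1 ≤ s → s ≤ T → P s) : a (T + 1) ≤ a 1 - T * δ := by
  induction T with
  | zero => simp
  | succ n ih =>
    have hprev := ih fun s hs1 hsn => hP s hs1 (hsn.trans n.le_succ)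
    have hlast := hstep (n + 1) n.succ_pos hP
    push_cast
    linarith

theorem exists_not_le_div_add_one_of_descent [FloorSemiring K] {B : K} (hδ : 0 < δ)
    (ha0 : ∀ t, 1 ≤ t → 0 ≤ a t) (ha1 : a 1 ≤ B)
    (hstep : ∀ t, 1 ≤ t → (∀ s, 1 ≤ s → s ≤ t → P s) → a (t + 1) ≤ a t - δ) :
    ∃ t : ℕ, 1 ≤ t ∧ (t : K) ≤ B / δ + 1 ∧ ¬ P t := by
  have hB : 0 ≤ B / δ := div_nonneg ((ha0 1 le_rfl).trans ha1) hδ.le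
  set T := ⌊B / δ⌋₊ + 1
  have hT_le : (T : K) ≤ B / δ + 1 := by
    simp only [T, Nat.cast_add, Nat.cast_one, add_le_add_iff_right]
    exact Nat.floor_le hB
  by_contra! hall
  have hP : ∀ s, 1 ≤ s → s ≤ T → P s := fun s hs1 hsT =>
    hall s hs1 ((Nat.cast_le.mpr hsT).trans hT_le)
  have hdrop := le_sub_mul_of_descent hstep hP
  have hT_mul : (T : K) * δ ≤ B := by linarith [ha0 (T + 1) T.succ_pos]
  have hT_gt : B / δ < T := by
    simpa only [T, Nat.cast_add, Nat.cast_one] using Nat.lt_floor_add_one (B / δ)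
  exact (le_div_iff₀ hδ).mpr hT_mul |>.not_gt hT_gt

end Descent

theorem stmt16_general (ε η C B₀ : ℝ) (hε : 0 < ε) (hη : 0 < η)
    (Dopt : ℝ) (a : ℕ → ℝ) (ha0 : ∀ t, 1 ≤ t → 0 ≤ a t) (ha1 : a 1 ≤ B₀ ^ 2)
    (dseq : ℕ → ℝ)
    (hdesc : ∀ t, 1 ≤ t →
      (∀ s, 1 ≤ s → s ≤ t → Dopt + (ε * C + η) / 2 ≤ dseq s) →
      a (t + 1) ≤ a t - 2 * ε * (dseq t - Dopt) + ε ^ 2 * C) :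
    ∃ t : ℕ, 1 ≤ t ∧ (t : ℝ) ≤ B₀ ^ 2 / (ε * η) + 1 ∧
      dseq t < Dopt + (ε * C + η) / 2 := by
  have hstep : ∀ t, 1 ≤ t → (∀ s, 1 ≤ s → s ≤ t → Dopt + (ε * C + η) / 2 ≤ dseq s) →
      a (t + 1) ≤ a t - ε * η := fun t ht hbig => by
    nlinarith [hdesc t ht hbig, hbig t ht le_rfl]
  obtain ⟨t, ht1, htle, hlt⟩ :=
    exists_not_le_div_add_one_of_descent (mul_pos hε hη) ha0 ha1 hstep
  exact ⟨t, ht1, htle, not_le.mp hlt⟩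

/-- Descent/hitting-time argument: if `a₁ ≤ B₀²`, the `a_t` are
nonnegative, and `a_{t+1} ≤ a_t − 2ε(d_t − Dopt) + ε²C` holds whenever
`d_s ≥ Dopt + (εC + η)/2` for all `1 ≤ s ≤ t`, then some `t ≤ B₀²/(εη) + 1`
satisfies `d_t < Dopt + (εC + η)/2`. -/
theorem stmt16 (ε η C B₀ : ℝ) (hε : 0 < ε) (hη : 0 < η) (hC : 0 < C) (hB₀ : 0 < B₀)
    (Dopt : ℝ) (a : ℕ → ℝ) (ha0 : ∀ t, 1 ≤ t → 0 ≤ a t) (ha1 : a 1 ≤ B₀ ^ 2)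
    (dseq : ℕ → ℝ)
    (hdesc : ∀ t, 1 ≤ t →
      (∀ s, 1 ≤ s → s ≤ t → Dopt + (ε * C + η) / 2 ≤ dseq s) →
      a (t + 1) ≤ a t - 2 * ε * (dseq t - Dopt) + ε ^ 2 * C) :
    ∃ t : ℕ, 1 ≤ t ∧ (t : ℝ) ≤ B₀ ^ 2 / (ε * η) + 1 ∧
      dseq t < Dopt + (ε * C + η) / 2 :=
  stmt16_general ε η C B₀ hε hη Dopt a ha0 ha1 dseq hdesc
end
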